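/- Let F be a field, n a natural number, and Δ an integer. Suppose given a bigraded algebra over F with degree shift n, i.e. F-vector spaces A(k,l) for each positive integer k and each integer l, together with F-bilinear multiplication maps A(k,l) × A(k',l') → A(k+k', l+l'−n). Assume that for every positive integer k and every integer l, if A(k,l) ≠ 0 then kΔ − n ≤ l ≤ kΔ + n − 1. Then the algebra is uniformly nilpotent: for every positive integer r with r > 2n and all homogeneous elements w_1,…,w_r with w_i ∈ A(k_i,l_i) (with no upper bound on the k_i), the product w_1·w_2·⋯·w_r is zero. -/
import Mathlib


/-- The left-nested product `(…((w 0) * (w 1)) * …) * (w (r-1))` of a family of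
`r` elements of a (possibly non-associative, non-unital) ring, with junk value `0`
for the empty family. -/
def nprod {V : Type*} [Mul V] [Zero V] : ∀ {r : ℕ}, (Fin r → V) → V
  | 0, _ => 0
  | 1, w => w 0
  | (r + 2), w => nprod (fun i : Fin (r + 1) => w i.castSucc) * w (Fin.last (r + 1))

lemma nprod_eq_zero_of_zero {V : Type*} [MulZeroClass V] :
    ∀ {r : ℕ} (w : Fin r → V), (∃ j, w j = 0) → nprod w = 0
  | 0, _, _ => rfl
  | 1, w, ⟨j, h⟩ => by
      have : nprod w = w 0 := rfl
      rw [this, ← Subsingleton.elim j 0, h]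
  | (r + 2), w, ⟨j, h⟩ => by
      have hd : nprod w = nprod (fun i : Fin (r + 1) => w i.castSucc) * w (Fin.last (r + 1)) :=
        rfl
      rcases Fin.eq_castSucc_or_eq_last j with ⟨i, rfl⟩ | rfl
      · rw [hd, nprod_eq_zero_of_zero (fun i : Fin (r + 1) => w i.castSucc) ⟨i, h⟩, zero_mul]
      · rw [hd, h, mul_zero]

lemma nprod_mem {F V : Type*} [Field F] [NonUnitalNonAssocRing V] [Module F V]
    [SMulCommClass F V V] [IsScalarTower F V V]
    (n : ℕ) (A : ℕ → ℤ → Submodule F V)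
    (hmul : ∀ {k k' : ℕ} {l l' : ℤ} {x y : V}, 0 < k → 0 < k' →
      x ∈ A k l → y ∈ A k' l' → x * y ∈ A (k + k') (l + l' - (n : ℤ))) :
    ∀ {r : ℕ}, 0 < r → ∀ (k : Fin r → ℕ) (l : Fin r → ℤ) (w : Fin r → V),
      (∀ i, 0 < k i) → (∀ i, w i ∈ A (k i) (l i)) →
      nprod w ∈ A (∑ i, k i) (∑ i, l i - ((r : ℤ) - 1) * n)
  | 0, hr, _, _, _, _, _ => absurd hr (by simp)
  | 1, _, k, l, w, hk, hw => by
      simpa [nprod] using hw 0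
  | (r + 2), _, k, l, w, hk, hw => by
      have hd : nprod w = nprod (fun i : Fin (r + 1) => w i.castSucc) * w (Fin.last (r + 1)) :=
        rfl
      have hfront := nprod_mem n A @hmul (Nat.succ_pos r)
        (fun i : Fin (r + 1) => k i.castSucc) (fun i => l i.castSucc)
        (fun i => w i.castSucc) (fun i => hk _) (fun i => hw _)
      have hpos : 0 < ∑ i : Fin (r + 1), k i.castSucc :=
        Finset.sum_pos (fun i _ => hk _) Finset.univ_nonempty
      have := hmul hpos (hk (Fin.last (r + 1))) hfront (hw (Fin.last (r + 1)))
      rw [hd]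
      convert this using 2
      · rw [Fin.sum_univ_castSucc]
      · rw [Fin.sum_univ_castSucc (f := l)]
        push_cast
        ring

/-- A bigraded algebra over a field `F` with degree shift `n` (realized as
`F`-subspaces `A k l` of an ambient `F`-bilinear multiplicative structure `V`),
whose supports satisfy `A k l ≠ 0 → k•Δ - n ≤ l ≤ k•Δ + n - 1` for an *integer*
mean index `Δ`, is uniformly nilpotent: every product of `r > 2n` homogeneous
elements (with no upper bound on the first degrees `k i`) vanishes. -/
theorem bigraded_integer_index_uniformly_nilpotent
    {F V : Type*} [Field F] [NonUnitalNonAssocRing V] [Module F V]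
    [SMulCommClass F V V] [IsScalarTower F V V]
    (n : ℕ) (Δ : ℤ)
    (A : ℕ → ℤ → Submodule F V)
    (hmul : ∀ {k k' : ℕ} {l l' : ℤ} {x y : V}, 0 < k → 0 < k' →
      x ∈ A k l → y ∈ A k' l' → x * y ∈ A (k + k') (l + l' - (n : ℤ)))
    (hsupp : ∀ (k : ℕ) (l : ℤ), 0 < k → A k l ≠ ⊥ →
      (k : ℤ) * Δ - (n : ℤ) ≤ l ∧ l ≤ (k : ℤ) * Δ + (n : ℤ) - 1) :
    ∀ r : ℕ, 2 * n < r →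
      ∀ (k : Fin r → ℕ) (l : Fin r → ℤ) (w : Fin r → V),
        (∀ i, 0 < k i) → (∀ i, w i ∈ A (k i) (l i)) →
        nprod w = 0 := by
  intro r hr k l w hk hw
  by_contra hne
  have hrpos : 0 < r := by omega
  have hmem := nprod_mem n A @hmul hrpos k l w hk hw
  have : Nonempty (Fin r) := ⟨⟨0, hrpos⟩⟩
  have hKpos : 0 < ∑ i, k i :=
    Finset.sum_pos (fun i _ => hk _) Finset.univ_nonempty
  -- the total degree space is nonzero
  have hbot : A (∑ i, k i) (∑ i, l i - ((r : ℤ) - 1) * n) ≠ ⊥ := by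
    intro h
    rw [h, Submodule.mem_bot] at hmem
    exact hne hmem
  have h1 := (hsupp _ _ hKpos hbot).1
  -- each factor's degree space is nonzero
  have hup : ∀ i, l i ≤ (k i : ℤ) * Δ + (n : ℤ) - 1 := by
    intro i
    refine (hsupp _ _ (hk i) ?_).2
    intro h
    have : w i = 0 := by
      have := hw i; rw [h, Submodule.mem_bot] at this; exact this
    exact hne (nprod_eq_zero_of_zero w ⟨i, this⟩)
  have hsum : ∑ i, l i ≤ ∑ i, ((k i : ℤ) * Δ + (n : ℤ) - 1) :=
    Finset.sum_le_sum fun i _ => hup i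
  have hsum' : ∑ i, ((k i : ℤ) * Δ + (n : ℤ) - 1)
      = ((∑ i, k i : ℕ) : ℤ) * Δ + (r : ℤ) * ((n : ℤ) - 1) := by
    rw [Finset.sum_sub_distrib, Finset.sum_add_distrib, ← Finset.sum_mul]
    push_cast
    simp [Finset.card_univ]
    ring
  have hrn : (2 * n : ℤ) < (r : ℤ) := by exact_mod_cast hr
  nlinarith [hsum, h1, hsum'.symm ▸ hsum]
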